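/- Let k ≥ 3 be an integer, 0 < c_d ≤ 1, and let Ω : {1,…,k} → ℝ be a query-degree distribution supported on degrees d ≤ c_d·log k (i.e., Ω_d = 0 for d > c_d·log k), with query difficulty d̄ = Σ_{d=1}^k d·Ω_d. Let ε > 0 and let n be an integer with n ≥ (5 log 2)(1+ε)·(k log k)/d̄. Then: (1) for every integer s with 1 ≤ s ≤ ⌊k/(2 c_d log k)⌋, C(k,s)·e^{−nΣ_s} < (1/k^ε)^s; and (2) for every integer s with ⌊k/(2 c_d log k)⌋ + 1 ≤ s ≤ k/2, C(k,s)·e^{−nΣ_s} < exp(−ε(log 2)k). -/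
import Mathlib

set_option maxHeartbeats 1000000


open Finset Real

/-- `⌈κ(s)⌉` where `κ(s) = (k−s+1)/(2s+1)`. -/
noncomputable def kappaCeil (k s : ℕ) : ℕ := ⌈(((k : ℝ) - s + 1) / (2 * s + 1))⌉₊

/-- `Σ_s = (1/5)·Σ_{d=⌈κ(s)⌉}^{k−⌈κ(s)⌉} Ω_d
      + (2s/5)·( Σ_{d=1}^{⌈κ(s)⌉−1} d·Ω_d/(k−d+1)
               + Σ_{d=k−⌈κ(s)⌉+1}^{k} (k−d)·Ω_d/(d+1) )`. -/
noncomputable def SigmaS (k : ℕ) (Ω : ℕ → ℝ) (s : ℕ) : ℝ :=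
  (1 / 5) * (∑ d ∈ Finset.Icc (kappaCeil k s) (k - kappaCeil k s), Ω d) +
    (2 * s / 5) *
      ((∑ d ∈ Finset.Icc 1 (kappaCeil k s - 1), (d : ℝ) * Ω d / ((k : ℝ) - d + 1)) +
        ∑ d ∈ Finset.Icc (k - kappaCeil k s + 1) k, ((k : ℝ) - d) * Ω d / ((d : ℝ) + 1))

private lemma log_le_aux {k : ℕ} (hk : 3 ≤ k) : Real.log k ≤ (2 * (k:ℝ) - 2) / 3 := by
  have hk3 : (3:ℝ) ≤ k := by exact_mod_cast hk
  have he : (2.7182818283:ℝ) < Real.exp 1 := Real.exp_one_gt_d9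
  have hepos : (0:ℝ) < Real.exp 1 := Real.exp_pos 1
  have h1 : (k:ℝ) / Real.exp 1 ≤ Real.exp ((k:ℝ)/Real.exp 1 - 1) := by
    have := Real.add_one_le_exp ((k:ℝ)/Real.exp 1 - 1)
    linarith
  have h2 : (k:ℝ) ≤ Real.exp ((k:ℝ)/Real.exp 1) := by
    have h5 : Real.exp 1 * Real.exp ((k:ℝ)/Real.exp 1 - 1) = Real.exp ((k:ℝ)/Real.exp 1) := by
      rw [← Real.exp_add]; congr 1; ring
    have h6 : Real.exp 1 * ((k:ℝ)/Real.exp 1) = k := by field_simp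
    have h7 := mul_le_mul_of_nonneg_left h1 hepos.le
    linarith
  have h3 : Real.log k ≤ (k:ℝ)/Real.exp 1 := (Real.log_le_iff_le_exp (by linarith)).mpr h2
  have h4 : (k:ℝ)/Real.exp 1 ≤ (2*(k:ℝ) - 2)/3 := by
    rw [div_le_div_iff₀ hepos (by norm_num)]
    nlinarith
  linarith

private lemma sigma_ge (k : ℕ) (hk : 3 ≤ k) (Ω : ℕ → ℝ)
    (hΩ0 : ∀ d ∈ Finset.Icc 1 k, 0 ≤ Ω d)
    (hsupp : ∀ d ∈ Finset.Icc 1 k, Ω d ≠ 0 → (d : ℝ) ≤ Real.log k)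
    (s : ℕ) (hs1 : 1 ≤ s) (hsk : s ≤ k) :
    ∑ d ∈ Finset.Icc 1 k,
      (if kappaCeil k s ≤ d then (1:ℝ)/5 else 2*(s:ℝ)/(5*(k:ℝ))*(d:ℝ)) * Ω d
      ≤ SigmaS k Ω s := by
  set m := kappaCeil k s with hm
  have hsR : (s:ℝ) ≤ k := by exact_mod_cast hsk
  have hs1R : (1:ℝ) ≤ s := by exact_mod_cast hs1
  have hκ0 : (0:ℝ) < ((k:ℝ) - s + 1)/(2*s+1) := by
    apply div_pos <;> nlinarith
  have hm1 : 1 ≤ m := Nat.ceil_pos.mpr hκ0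
  have hm3 : 3 * m ≤ k + 2 := by
    have h1 : (m:ℝ) < ((k:ℝ) - s + 1)/(2*s+1) + 1 := Nat.ceil_lt_add_one hκ0.le
    have h2 : ((k:ℝ) - s + 1)/(2*s+1) ≤ (k:ℝ)/3 := by
      rw [div_le_div_iff₀ (by nlinarith) (by norm_num)]
      nlinarith
    have h3 : ((3*m:ℕ):ℝ) < ((k+3:ℕ):ℝ) := by push_cast; linarith
    have := Nat.cast_lt.mp h3
    omega
  have hmk : m ≤ k := by omega
  have h2m : m - 1 ≤ k - m := by omega
  have hkmR : ((k - m : ℕ):ℝ) = (k:ℝ) - m := by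
    push_cast [Nat.cast_sub hmk]; ring
  have hkm : Real.log k ≤ ((k - m : ℕ):ℝ) := by
    rw [hkmR]
    have h1 := log_le_aux hk
    have hm3R : (3*(m:ℝ)) ≤ (k:ℝ) + 2 := by exact_mod_cast hm3
    linarith
  have hDsupp : ∀ d ∈ Finset.Icc 1 k, Ω d ≠ 0 → d ≤ k - m := by
    intro d hd hne
    have h1 : (d:ℝ) ≤ ((k-m:ℕ):ℝ) := le_trans (hsupp d hd hne) hkm
    exact_mod_cast h1
  -- step 1: restrict sum to Icc 1 (k-m)
  have step1 : ∑ d ∈ Finset.Icc 1 k,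
      (if m ≤ d then (1:ℝ)/5 else 2*(s:ℝ)/(5*(k:ℝ))*(d:ℝ)) * Ω d
      = ∑ d ∈ Finset.Icc 1 (k-m),
      (if m ≤ d then (1:ℝ)/5 else 2*(s:ℝ)/(5*(k:ℝ))*(d:ℝ)) * Ω d := by
    symm
    apply Finset.sum_subset (Finset.Icc_subset_Icc_right (Nat.sub_le k m))
    intro d hd hnd
    simp only [Finset.mem_Icc] at hd hnd
    have hΩd : Ω d = 0 := by
      by_contra h
      have := hDsupp d (Finset.mem_Icc.mpr hd) h
      omega
    simp [hΩd]
  -- step 2: split the interval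
  have e1 : Finset.Icc 1 (m-1) = Finset.Ioc 0 (m-1) := Finset.Icc_add_one_left_eq_Ioc 0 (m-1)
  have e2 : Finset.Icc m (k-m) = Finset.Ioc (m-1) (k-m) := by
    rw [← Finset.Icc_add_one_left_eq_Ioc]; congr 1; omega
  have e3 : Finset.Icc 1 (k-m) = Finset.Ioc 0 (k-m) := Finset.Icc_add_one_left_eq_Ioc 0 (k-m)
  have step2 : ∑ d ∈ Finset.Icc 1 (k-m),
      (if m ≤ d then (1:ℝ)/5 else 2*(s:ℝ)/(5*(k:ℝ))*(d:ℝ)) * Ω d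
      = (∑ d ∈ Finset.Icc 1 (m-1), 2*(s:ℝ)/(5*(k:ℝ))*(d:ℝ) * Ω d)
        + ∑ d ∈ Finset.Icc m (k-m), (1/5 : ℝ) * Ω d := by
    rw [e3, ← Finset.Ioc_union_Ioc_eq_Ioc (Nat.zero_le (m-1)) h2m,
      Finset.sum_union (by
        rw [Finset.disjoint_left]
        intro a ha hb
        simp only [Finset.mem_Ioc] at ha hb
        omega), ← e1, ← e2]
    congr 1
    · apply Finset.sum_congr rfl
      intro d hd
      simp only [Finset.mem_Icc] at hd
      rw [if_neg (by omega)]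
    · apply Finset.sum_congr rfl
      intro d hd
      simp only [Finset.mem_Icc] at hd
      rw [if_pos hd.1]
  rw [step1, step2]
  unfold SigmaS
  rw [← hm]
  have hk0 : (0:ℝ) < k := by positivity
  have hS3 : (0:ℝ) ≤ ∑ d ∈ Finset.Icc (k - m + 1) k, ((k:ℝ) - d) * Ω d / ((d:ℝ) + 1) := by
    apply Finset.sum_nonneg
    intro d hd
    simp only [Finset.mem_Icc] at hd
    have hd1 : 1 ≤ d := by omega
    have hΩd : 0 ≤ Ω d := hΩ0 d (Finset.mem_Icc.mpr ⟨hd1, hd.2⟩)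
    have hdk : (d:ℝ) ≤ k := by exact_mod_cast hd.2
    apply div_nonneg (mul_nonneg (by linarith) hΩd) (by positivity)
  have hS1 : ∑ d ∈ Finset.Icc 1 (m-1), 2*(s:ℝ)/(5*(k:ℝ))*(d:ℝ) * Ω d
      ≤ (2*(s:ℝ)/5) * ∑ d ∈ Finset.Icc 1 (m-1), (d:ℝ) * Ω d / ((k:ℝ) - d + 1) := by
    rw [Finset.mul_sum]
    apply Finset.sum_le_sum
    intro d hd
    simp only [Finset.mem_Icc] at hd
    have hd1 : 1 ≤ d := hd.1
    have hdk : d ≤ k := by omega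
    have hΩd : 0 ≤ Ω d := hΩ0 d (Finset.mem_Icc.mpr ⟨hd1, hdk⟩)
    have hd1R : (1:ℝ) ≤ d := by exact_mod_cast hd1
    have hdkR : (d:ℝ) ≤ k := by exact_mod_cast hdk
    have hden : (0:ℝ) < (k:ℝ) - d + 1 := by linarith
    have h1 : (d:ℝ) * Ω d / (k:ℝ) ≤ (d:ℝ) * Ω d / ((k:ℝ) - d + 1) := by
      apply div_le_div_of_nonneg_left (by positivity) hden (by linarith)
    calc 2*(s:ℝ)/(5*(k:ℝ))*(d:ℝ) * Ω d = (2*(s:ℝ)/5) * ((d:ℝ) * Ω d / (k:ℝ)) := by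
          field_simp
      _ ≤ (2*(s:ℝ)/5) * ((d:ℝ) * Ω d / ((k:ℝ) - d + 1)) := by
          apply mul_le_mul_of_nonneg_left h1 (by positivity)
  have hS2 : ∑ d ∈ Finset.Icc m (k-m), (1/5 : ℝ) * Ω d
      = (1/5) * ∑ d ∈ Finset.Icc m (k-m), Ω d := by
    rw [Finset.mul_sum]
  rw [hS2]
  have := mul_le_mul_of_nonneg_left hS3 (by positivity : (0:ℝ) ≤ 2*(s:ℝ)/5)
  nlinarith [hS1, mul_le_mul_of_nonneg_left hS3 (by positivity : (0:ℝ) ≤ 2*(s:ℝ)/5)]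

theorem stmt2 (k : ℕ) (hk : 3 ≤ k) (cd : ℝ) (hcd0 : 0 < cd) (hcd1 : cd ≤ 1)
    (Ω : ℕ → ℝ) (hΩ0 : ∀ d ∈ Finset.Icc 1 k, 0 ≤ Ω d)
    (hΩ1 : ∑ d ∈ Finset.Icc 1 k, Ω d = 1)
    (hsupp : ∀ d ∈ Finset.Icc 1 k, cd * Real.log k < (d : ℝ) → Ω d = 0)
    (dbar : ℝ) (hdbar : dbar = ∑ d ∈ Finset.Icc 1 k, (d : ℝ) * Ω d)
    (ε : ℝ) (hε : 0 < ε) (n : ℕ)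
    (hn : (5 * Real.log 2) * (1 + ε) * ((k : ℝ) * Real.log k) / dbar ≤ (n : ℝ)) :
    (∀ s : ℕ, 1 ≤ s → s ≤ ⌊(k : ℝ) / (2 * cd * Real.log k)⌋₊ →
      (k.choose s : ℝ) * Real.exp (-(n : ℝ) * SigmaS k Ω s) < (1 / (k : ℝ) ^ ε) ^ s) ∧
    (∀ s : ℕ, ⌊(k : ℝ) / (2 * cd * Real.log k)⌋₊ + 1 ≤ s → 2 * s ≤ k →
      (k.choose s : ℝ) * Real.exp (-(n : ℝ) * SigmaS k Ω s) <
        Real.exp (-ε * Real.log 2 * k)) := by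
  have hk1R : (1:ℝ) < k := by exact_mod_cast (by omega : 1 < k)
  have hk0 : (0:ℝ) < k := by linarith
  have hlogk : 0 < Real.log k := Real.log_pos hk1R
  have hL1 : 1 ≤ cd * Real.log k := by
    by_contra h
    push_neg at h
    have hz : ∑ d ∈ Finset.Icc 1 k, Ω d = 0 := by
      apply Finset.sum_eq_zero
      intro d hd
      simp only [Finset.mem_Icc] at hd
      have : (1:ℝ) ≤ d := by exact_mod_cast hd.1
      exact hsupp d (Finset.mem_Icc.mpr hd) (by linarith)
    rw [hΩ1] at hz
    norm_num at hz
  have hLlog : cd * Real.log k ≤ Real.log k := by nlinarith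
  have hsupp' : ∀ d ∈ Finset.Icc 1 k, Ω d ≠ 0 → (d:ℝ) ≤ Real.log k := by
    intro d hd h
    by_contra hgt
    push_neg at hgt
    exact h (hsupp d hd (lt_of_le_of_lt hLlog hgt))
  have hdbar1 : 1 ≤ dbar := by
    rw [hdbar, ← hΩ1]
    apply Finset.sum_le_sum
    intro d hd
    simp only [Finset.mem_Icc] at hd
    have h1 : (1:ℝ) ≤ d := by exact_mod_cast hd.1
    have h2 : 0 ≤ Ω d := hΩ0 d (Finset.mem_Icc.mpr hd)
    nlinarith
  have hdbar0 : 0 < dbar := by linarith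
  have hlog2 : (0.6931471803:ℝ) < Real.log 2 := Real.log_two_gt_d9
  have h2L : (0:ℝ) < 2 * cd * Real.log k := by nlinarith
  constructor
  · -- Part 1
    intro s hs1 hs2
    have hs1R : (1:ℝ) ≤ s := by exact_mod_cast hs1
    have hfl : (s:ℝ) ≤ (k:ℝ)/(2*cd*Real.log k) :=
      le_trans (by exact_mod_cast hs2) (Nat.floor_le (by positivity))
    have hsR : (s:ℝ) ≤ k := by
      have h1 : (k:ℝ)/(2*cd*Real.log k) ≤ (k:ℝ)/2 := by
        apply div_le_div_of_nonneg_left hk0.le (by norm_num) (by linarith)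
      linarith
    have hsk : s ≤ k := by exact_mod_cast Nat.cast_le.mp (by exact_mod_cast hsR)
    have hSig := sigma_ge k hk Ω hΩ0 hsupp' s hs1 hsk
    have hcs : (2*(s:ℝ)/(5*k)) * dbar ≤ ∑ d ∈ Finset.Icc 1 k,
        (if kappaCeil k s ≤ d then (1:ℝ)/5 else 2*(s:ℝ)/(5*(k:ℝ))*(d:ℝ)) * Ω d := by
      rw [hdbar, Finset.mul_sum]
      apply Finset.sum_le_sum
      intro d hd
      rcases eq_or_ne (Ω d) 0 with h0 | h0
      · simp [h0]
      · have hΩd : 0 ≤ Ω d := hΩ0 d hd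
        have hdL : (d:ℝ) ≤ cd * Real.log k := by
          by_contra hgt
          push_neg at hgt
          exact h0 (hsupp d hd hgt)
        split_ifs with hmd
        · have hsL : (s:ℝ)*(2*cd*Real.log k) ≤ k := (le_div_iff₀ h2L).mp hfl
          have hs0 : (0:ℝ) ≤ s := by positivity
          have h2sd : 2*(s:ℝ)*d ≤ k := by nlinarith
          rw [div_mul_eq_mul_div, div_le_iff₀ (by positivity : (0:ℝ) < 5*(k:ℝ))]
          nlinarith
        · apply le_of_eq; ring
    have hnSig : 2*Real.log 2*(1+ε)*(s:ℝ)*Real.log k ≤ (n:ℝ) * SigmaS k Ω s := by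
      have hb0 : (0:ℝ) ≤ (2*(s:ℝ)/(5*k))*dbar := by
        apply mul_nonneg (by positivity) hdbar0.le
      have hSig0 : (2*(s:ℝ)/(5*k))*dbar ≤ SigmaS k Ω s := le_trans hcs hSig
      calc 2*Real.log 2*(1+ε)*(s:ℝ)*Real.log k
          = ((5 * Real.log 2) * (1 + ε) * ((k:ℝ) * Real.log k) / dbar)
              * ((2*(s:ℝ)/(5*k))*dbar) := by
            field_simp
        _ ≤ (n:ℝ) * ((2*(s:ℝ)/(5*k))*dbar) := mul_le_mul_of_nonneg_right hn hb0
        _ ≤ (n:ℝ) * SigmaS k Ω s := mul_le_mul_of_nonneg_left hSig0 (Nat.cast_nonneg n)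
    have hC : (k.choose s : ℝ) ≤ Real.exp ((s:ℝ) * Real.log k) := by
      have h1 : (k.choose s : ℝ) ≤ ((k:ℝ))^s := by
        exact_mod_cast Nat.choose_le_pow k s
      have h2 : ((k:ℝ))^s = Real.exp ((s:ℝ) * Real.log k) := by
        rw [Real.exp_nat_mul, Real.exp_log hk0]
      linarith
    have hRHS : ((1:ℝ) / (k:ℝ) ^ ε) ^ s = Real.exp ((s:ℝ) * (-(ε * Real.log k))) := by
      rw [Real.exp_nat_mul, ← Real.exp_log (x := (k:ℝ) ^ ε) (by positivity),
        Real.log_rpow hk0, one_div, ← Real.exp_neg]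
    rw [hRHS]
    calc (k.choose s : ℝ) * Real.exp (-(n : ℝ) * SigmaS k Ω s)
        ≤ Real.exp ((s:ℝ) * Real.log k) * Real.exp (-(n : ℝ) * SigmaS k Ω s) := by
          apply mul_le_mul_of_nonneg_right hC (Real.exp_pos _).le
      _ = Real.exp ((s:ℝ) * Real.log k + -(n:ℝ) * SigmaS k Ω s) := by
          rw [← Real.exp_add]
      _ < Real.exp ((s:ℝ) * (-(ε * Real.log k))) := by
          rw [Real.exp_lt_exp]
          have hP : (0:ℝ) < (s:ℝ) * Real.log k := by
            apply mul_pos (by linarith) hlogk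
          have h9 : (0:ℝ) < (2*Real.log 2 - 1) * ((1+ε) * ((s:ℝ) * Real.log k)) :=
            mul_pos (by linarith) (mul_pos (by linarith) hP)
          nlinarith [hnSig, h9]
  · -- Part 2
    intro s hs1 hs2
    have hs1' : 1 ≤ s := by omega
    have hsk : s ≤ k := by omega
    have hs1R : (1:ℝ) ≤ s := by exact_mod_cast hs1'
    have hflgt : (k:ℝ)/(2*cd*Real.log k) < s := by
      have h1 := Nat.lt_floor_add_one ((k:ℝ)/(2*cd*Real.log k))
      have h2 : ((⌊(k : ℝ) / (2 * cd * Real.log k)⌋₊ + 1 : ℕ):ℝ) ≤ s := by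
        exact_mod_cast hs1
      push_cast at h2
      linarith
    have hkey : (k:ℝ) < 2*(s:ℝ)*Real.log k := by
      have h1 : (k:ℝ) < (s:ℝ) * (2*cd*Real.log k) := (div_lt_iff₀ h2L).mp hflgt
      nlinarith
    have hSig := sigma_ge k hk Ω hΩ0 hsupp' s hs1' hsk
    have hcs : dbar/(5*Real.log k) ≤ ∑ d ∈ Finset.Icc 1 k,
        (if kappaCeil k s ≤ d then (1:ℝ)/5 else 2*(s:ℝ)/(5*(k:ℝ))*(d:ℝ)) * Ω d := by
      rw [hdbar, Finset.sum_div]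
      apply Finset.sum_le_sum
      intro d hd
      rcases eq_or_ne (Ω d) 0 with h0 | h0
      · simp [h0]
      · have hΩd : 0 ≤ Ω d := hΩ0 d hd
        have hdlog : (d:ℝ) ≤ Real.log k := hsupp' d hd h0
        have hd0 : (0:ℝ) ≤ d := by positivity
        split_ifs with hmd
        · rw [div_le_iff₀ (by positivity : (0:ℝ) < 5*Real.log k)]
          nlinarith
        · rw [div_le_iff₀ (by positivity : (0:ℝ) < 5*Real.log k)]
          have hEq : 2*(s:ℝ)/(5*(k:ℝ))*(d:ℝ) * Ω d * (5*Real.log k)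
              = (2*(s:ℝ)*Real.log k) * ((d:ℝ)*Ω d) / k := by
            field_simp
          rw [hEq, le_div_iff₀ hk0]
          nlinarith [mul_nonneg hd0 hΩd]
    have hnSig : (1+ε)*Real.log 2*(k:ℝ) ≤ (n:ℝ) * SigmaS k Ω s := by
      have hb0 : (0:ℝ) ≤ dbar/(5*Real.log k) := by
        apply div_nonneg hdbar0.le (by positivity)
      have hSig0 : dbar/(5*Real.log k) ≤ SigmaS k Ω s := le_trans hcs hSig
      calc (1+ε)*Real.log 2*(k:ℝ)
          = ((5 * Real.log 2) * (1 + ε) * ((k:ℝ) * Real.log k) / dbar)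
              * (dbar/(5*Real.log k)) := by
            field_simp
        _ ≤ (n:ℝ) * (dbar/(5*Real.log k)) := mul_le_mul_of_nonneg_right hn hb0
        _ ≤ (n:ℝ) * SigmaS k Ω s := mul_le_mul_of_nonneg_left hSig0 (Nat.cast_nonneg n)
    have hCnat : k.choose s < 2^k := by
      have h1 : k.choose s < ∑ i ∈ Finset.range (k+1), k.choose i := by
        apply Finset.single_lt_sum (by omega : (0:ℕ) ≠ s)
          (Finset.mem_range.mpr (by omega)) (Finset.mem_range.mpr (by omega))
          (by simp) (fun i _ _ => Nat.zero_le _)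
      rw [Nat.sum_range_choose] at h1
      exact h1
    have hC : (k.choose s : ℝ) < Real.exp ((k:ℝ) * Real.log 2) := by
      have h1 : (k.choose s : ℝ) < (2:ℝ)^k := by exact_mod_cast hCnat
      have h2 : (2:ℝ)^k = Real.exp ((k:ℝ) * Real.log 2) := by
        rw [Real.exp_nat_mul, Real.exp_log (by norm_num : (0:ℝ) < 2)]
      linarith
    calc (k.choose s : ℝ) * Real.exp (-(n : ℝ) * SigmaS k Ω s)
        < Real.exp ((k:ℝ) * Real.log 2) * Real.exp (-(n : ℝ) * SigmaS k Ω s) := by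
          apply mul_lt_mul_of_pos_right hC (Real.exp_pos _)
      _ = Real.exp ((k:ℝ) * Real.log 2 + -(n:ℝ) * SigmaS k Ω s) := by
          rw [← Real.exp_add]
      _ ≤ Real.exp (-ε * Real.log 2 * k) := by
          rw [Real.exp_le_exp]
          linarith [hnSig]
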